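/- Let B be an infinite subset of A and let C = N_d(B) be the d-neighborhood of B in the graph of entourages Γ (with respect to d_A), for some d > 0. Then the topological boundaries (sets of accumulation points in T̃ = T ⊔ A) of B and of C coincide. In particular, if (b_n) and (c_n) are two sequences in A with d_A(b_n, c_n) uniformly bounded, then (b_n) converges to a point p ∈ T if and only if (c_n) converges to p. -/

import Mathlib

namespace RHG

/-- Triples with pairwise distinct components. -/
def distinct3 {X : Type*} : Set (X × X × X) :=
  {x | x.1 ≠ x.2.1 ∧ x.1 ≠ x.2.2 ∧ x.2.1 ≠ x.2.2}

/-- Pairs with distinct components. -/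
def distinct2 {X : Type*} : Set (X × X) := {x | x.1 ≠ x.2}

/-- The action `act` of `G` on `X` is 3-discontinuous: the induced action on the space of
(ordered) triples of pairwise distinct points is properly discontinuous. -/
def ThreeDisc {G X : Type*} [TopologicalSpace X] (act : G → X → X) : Prop :=
  ∀ K : Set (X × X × X), IsCompact K → K ⊆ distinct3 →
    Set.Finite {g : G |
      (((fun x : X × X × X => (act g x.1, act g x.2.1, act g x.2.2)) '' K) ∩ K).Nonempty}

/-- The action `act` of `G` on `X` is 2-cocompact: the action on the space of (ordered) pairs
of distinct points is cocompact. -/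
def TwoCocompact {G X : Type*} [TopologicalSpace X] (act : G → X → X) : Prop :=
  ∃ K : Set (X × X), IsCompact K ∧ K ⊆ distinct2 ∧
    ∀ x : X × X, x ∈ (distinct2 : Set (X × X)) → ∃ g : G, (act g x.1, act g x.2) ∈ K

/-- `ρ` is an action of the group `G` on `T` by homeomorphisms. -/
structure IsTopAction (G : Type*) [Group G] (T : Type*) [TopologicalSpace T]
    (ρ : G → T ≃ₜ T) : Prop where
  map_one : ρ 1 = Homeomorph.refl T
  map_mul : ∀ g h : G, ρ (g * h) = (ρ h).trans (ρ g)

/-- The stabilizer of a point for an action by homeomorphisms. -/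
def actStab {G : Type*} [Group G] {T : Type*} [TopologicalSpace T]
    (ρ : G → T ≃ₜ T) (hρ : IsTopAction G T ρ) (p : T) : Subgroup G where
  carrier := {g : G | ρ g p = p}
  one_mem' := by
    simp only [Set.mem_setOf_eq, hρ.map_one, Homeomorph.refl_apply, id_eq]
  mul_mem' := by
    intro a b ha hb
    simp only [Set.mem_setOf_eq] at *
    rw [hρ.map_mul, Homeomorph.trans_apply, hb, ha]
  inv_mem' := by
    intro a ha
    simp only [Set.mem_setOf_eq] at *
    have h1 : ρ (a⁻¹ * a) p = ρ a⁻¹ (ρ a p) := by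
      rw [hρ.map_mul, Homeomorph.trans_apply]
    rw [inv_mul_cancel, hρ.map_one, ha] at h1
    simpa using h1.symm

/-- A parabolic point: its stabilizer is infinite and it is the unique fixed point
of its stabilizer. -/
def IsParabolicPt {G : Type*} [Group G] {T : Type*} [TopologicalSpace T]
    (ρ : G → T ≃ₜ T) (hρ : IsTopAction G T ρ) (p : T) : Prop :=
  Set.Infinite ((actStab ρ hρ p : Set G)) ∧
    ∀ q : T, (∀ g ∈ actStab ρ hρ p, ρ g q = q) → q = p

/-- `T` contains at least three points. -/
def HasThreePts (T : Type*) : Prop := ∃ x y z : T, x ≠ y ∧ x ≠ z ∧ y ≠ z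

end RHG

namespace RHG

/-- An entourage of a topological space `T`: a symmetric neighborhood of the diagonal
in `T × T` (identified with a neighborhood of the diagonal in the symmetric square). -/
structure Entourage (T : Type*) [TopologicalSpace T] where
  carrier : Set (T × T)
  symm' : ∀ x y : T, (x, y) ∈ carrier → (y, x) ∈ carrier
  mem_nhds' : ∀ x : T, carrier ∈ nhds (x, x)

variable {T : Type*} [TopologicalSpace T]

/-- A set is `e`-small if its `Δ_e`-diameter is at most 1, i.e. any two of its points
form a pair belonging to `e`. -/
def eSmall (e : Entourage T) (s : Set T) : Prop :=
  ∀ x ∈ s, ∀ y ∈ s, (x, y) ∈ e.carrier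

/-- `Δ_e (x, y) ≤ k` for the maximal metric `Δ_e` with `Δ_e ≤ 1` on pairs of `e`:
there is a chain of length `k` from `x` to `y` with consecutive pairs in `e`. -/
def eDistLE (e : Entourage T) (k : ℕ) (x y : T) : Prop :=
  ∃ c : ℕ → T, c 0 = x ∧ c k = y ∧ ∀ i < k, (c i, c (i + 1)) ∈ e.carrier

/-- Two entourages are unlinked if `T` is the union of an `a`-small and a `b`-small set. -/
def EntUnlinked (a b : Entourage T) : Prop :=
  ∃ sa sb : Set T, eSmall a sa ∧ eSmall b sb ∧ sa ∪ sb = Set.univ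

/-- Two entourages are linked if they are not unlinked. -/
def EntLinked (a b : Entourage T) : Prop := ¬ EntUnlinked a b

/-- Standing convention on entourages: self-linked, and `Δ_e`-diameter of `T` greater
than `4`. -/
def GoodEnt (e : Entourage T) : Prop :=
  EntLinked e e ∧ ∃ x y : T, ¬ eDistLE e 4 x y

/-- The shadow `sh_a b`: the intersection of all `a`-small sets with `b`-small complement. -/
def shadow (a b : Entourage T) : Set T :=
  ⋂₀ {s : Set T | eSmall a s ∧ eSmall b sᶜ}

/-- The betweenness relation `a − b − c (k)`:
`a ⋈ b ⋈ c` and `Δ_b(sh_b a, sh_b c) > k`. -/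
def Btw (a b c : Entourage T) (k : ℕ) : Prop :=
  EntUnlinked a b ∧ EntUnlinked b c ∧
    ∀ x ∈ shadow b a, ∀ y ∈ shadow b c, ¬ eDistLE b k x y

/-- The betweenness relation `a − b − p (k)` for a point `p ∈ T`:
`a ⋈ b` and `Δ_b(sh_b a, b₀) > k` for every `b`-small neighborhood `b₀` of `p`. -/
def BtwP (a b : Entourage T) (p : T) (k : ℕ) : Prop :=
  EntUnlinked a b ∧
    ∀ s : Set T, eSmall b s → s ∈ nhds p → ∀ x ∈ shadow b a, ∀ y ∈ s, ¬ eDistLE b k x y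

/-- The betweenness relation `p − b − q (k)` for points `p, q ∈ T`:
`Δ_b(b₁, b₂) > k` for all `b`-small neighborhoods `b₁` of `p` and `b₂` of `q`. -/
def BtwPP (p : T) (b : Entourage T) (q : T) (k : ℕ) : Prop :=
  ∀ s₁ s₂ : Set T, eSmall b s₁ → s₁ ∈ nhds p → eSmall b s₂ → s₂ ∈ nhds q →
    ∀ x ∈ s₁, ∀ y ∈ s₂, ¬ eDistLE b k x y

/-- The image of an entourage under a homeomorphism of `T`. -/
def entMap (φ : T ≃ₜ T) (e : Entourage T) : Entourage T where
  carrier := (fun x : T × T => ((φ.symm x.1 : T), (φ.symm x.2 : T))) ⁻¹' e.carrier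
  symm' := fun x y h => e.symm' _ _ h
  mem_nhds' := fun x => by
    have hcont : Continuous fun x : T × T => ((φ.symm x.1 : T), (φ.symm x.2 : T)) :=
      (φ.symm.continuous.comp continuous_fst).prodMk (φ.symm.continuous.comp continuous_snd)
    exact hcont.continuousAt.preimage_mem_nhds (e.mem_nhds' (φ.symm x))

/-- The orbit of an entourage under an action of `G` on `T` by homeomorphisms. -/
def entOrbit {G : Type*} [Group G] (ρ : G → T ≃ₜ T) (a₀ : Entourage T) :
    Set (Entourage T) :=
  {e | ∃ g : G, e = entMap (ρ g) a₀}

/-- A set of entourages is discrete if every entourage is linked with only finitely many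
of its elements. -/
def DiscreteEnts (A : Set (Entourage T)) : Prop :=
  ∀ w : Entourage T, Set.Finite {a ∈ A | EntLinked a w}

/-- `d_A(a, b) ≤ n` in the graph of entourages: there is a walk of length `n` in `A`
from `a` to `b` with consecutive vertices linked. -/
def AdistLE (A : Set (Entourage T)) (n : ℕ) (a b : Entourage T) : Prop :=
  ∃ c : ℕ → Entourage T, c 0 = a ∧ c n = b ∧ (∀ i ≤ n, c i ∈ A) ∧
    ∀ i < n, EntLinked (c i) (c (i + 1))

/-- The `d`-neighborhood of a subset `S` inside the graph of entourages on `A`. -/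
def Anbhd (A : Set (Entourage T)) (d : ℕ) (S : Set (Entourage T)) : Set (Entourage T) :=
  {a ∈ A | ∃ b ∈ S, AdistLE A d a b}

/-- The horosphere `T_{A,k}(p)`: the entourages of `A` which are not separated
from `p` by any element of `A`. -/
def horosphere (A : Set (Entourage T)) (k : ℕ) (p : T) : Set (Entourage T) :=
  {e ∈ A | ¬ ∃ a ∈ A, BtwP e a p k}

/-- `Ψ_k(a,b) = {c ∈ A : a − c − b (k)}`. -/
def Psi (A : Set (Entourage T)) (k : ℕ) (a b : Entourage T) : Set (Entourage T) :=
  {c ∈ A | Btw a c b k}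

/-- The topology on `T̃ = T ⊔ A`, generated by the singletons of elements of `A` and
the convex hulls `õ = o ∪ {e ∈ A : oᶜ is e-small}` of open sets `o ⊆ T`. -/
def tildeTop (A : Set (Entourage T)) : TopologicalSpace (T ⊕ ↥A) :=
  TopologicalSpace.generateFrom
    ({s | ∃ e : ↥A, s = {Sum.inr e}} ∪
      {s | ∃ o : Set T, IsOpen o ∧
        s = Sum.inl '' o ∪ Sum.inr '' {e : ↥A | eSmall (↑e) oᶜ}})

/-- The set of accumulation points of a set `S` in a topological space. -/
def accPts {X : Type*} [TopologicalSpace X] (S : Set X) : Set X :=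
  {x | x ∈ closure (S \ {x})}

/-- The extension of the action of `G` on `T` to `T̃ = T ⊔ A`. -/
def tildeAct {G : Type*} [Group G] (ρ : G → T ≃ₜ T) (A : Set (Entourage T))
    (hinv : ∀ g : G, ∀ a ∈ A, entMap (ρ g) a ∈ A) (g : G) :
    T ⊕ ↥A → T ⊕ ↥A :=
  fun x => match x with
  | Sum.inl t => Sum.inl (ρ g t)
  | Sum.inr e => Sum.inr ⟨entMap (ρ g) ↑e, hinv g (↑e) e.2⟩

/-- The `m`-separation property for a set of entourages. -/
def Separates (A : Set (Entourage T)) (m : ℕ) : Prop :=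
  ∀ p q : T, p ≠ q → ∃ a ∈ A, BtwPP p a q m

/-- `A` generates the filter of entourages. -/
def GeneratesFilter (A : Set (Entourage T)) : Prop :=
  ∀ u : Entourage T, ∃ (n : ℕ) (f : Fin n → Entourage T),
    (∀ i, f i ∈ A) ∧ (⋂ i, (f i).carrier) ⊆ u.carrier

/-- `γ` restricted to the integer interval `[i, j]` is a `c`-quasigeodesic of the graph
of entourages on `A`. -/
def IsQGOn (A : Set (Entourage T)) (c : ℝ) (i j : ℕ) (γ : ℕ → Entourage T) : Prop :=
  ∀ s t : ℕ, i ≤ s → s ≤ j → i ≤ t → t ≤ j →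
    (∀ m : ℕ, AdistLE A m (γ s) (γ t) → (1 / c) * |(s : ℝ) - (t : ℝ)| - c < (m : ℝ)) ∧
    ∃ m : ℕ, AdistLE A m (γ s) (γ t) ∧ (m : ℝ) ≤ c * |(s : ℝ) - (t : ℝ)| + c

/-- `γ : [0, n] → A` is a `c`-quasigeodesic of the graph of entourages on `A`. -/
def IsQG (A : Set (Entourage T)) (c : ℝ) (n : ℕ) (γ : ℕ → Entourage T) : Prop :=
  (∀ i ≤ n, γ i ∈ A) ∧ IsQGOn A c 0 n γ

/-- `γ : [0, n] → A` is a curve (edge-path) in the graph of entourages on `A`. -/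
def IsCurve (A : Set (Entourage T)) (n : ℕ) (γ : ℕ → Entourage T) : Prop :=
  (∀ i ≤ n, γ i ∈ A) ∧ ∀ i < n, EntLinked (γ i) (γ (i + 1))

/-- `γ : [0, n] → A` is an `(l, c)`-tight curve (with horosphere parameter `k` and
neighborhood radius `r`): every subinterval of length at most `l` is a `c`-quasigeodesic,
and if more than `l` points of the image of a subinterval lie in the `r`-neighborhood of
a horosphere of a parabolic point, then the endpoints of the subinterval are at
`d_A`-distance greater than `l/c − c`. -/
def IsTight (A : Set (Entourage T)) (k l : ℕ) (c : ℝ) (r n : ℕ)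
    (γ : ℕ → Entourage T) : Prop :=
  IsCurve A n γ ∧
  (∀ i j : ℕ, i ≤ j → j ≤ n → j - i ≤ l → IsQGOn A c i j γ) ∧
  (∀ i j : ℕ, i ≤ j → j ≤ n → ∀ p : T, (horosphere A k p).Infinite →
    l < Set.ncard ((γ '' Set.Icc i j) ∩ Anbhd A r (horosphere A k p)) →
    ∀ m : ℕ, AdistLE A m (γ i) (γ j) → (l : ℝ) / c - c < (m : ℝ))

/-- The vertex `γ i` of the curve `γ` is `d`-horospherical (with constant `e`): `γ`
contains subsegments `[i₁, i]` and `[i, i₂]` of length greater than `e` lying in the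
`d`-neighborhood of the horosphere of a parabolic point. -/
def IsHoroVertex (A : Set (Entourage T)) (k d e n : ℕ) (γ : ℕ → Entourage T)
    (i : ℕ) : Prop :=
  ∃ (p : T) (i₁ i₂ : ℕ), (horosphere A k p).Infinite ∧ i₁ ≤ i ∧ i ≤ i₂ ∧ i₂ ≤ n ∧
    e < i - i₁ ∧ e < i₂ - i ∧
    ∀ m : ℕ, i₁ ≤ m → m ≤ i₂ → γ m ∈ Anbhd A d (horosphere A k p)

end RHG

/-! A point `p ∈ T` accumulates on `S ⊆ A` in `T̃` iff for every neighborhood `o` of `p`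
some `e ∈ S` makes `oᶜ` `e`-small, so it suffices to show that this property survives one
step in the graph of entourages. Given a neighborhood `u` of `p`, take a closed
neighborhood `t` of `p` inside `u` and the entourage `w` of pairs not joining `uᶜ` to `t`.
If `tᶜ` is `a`-small and `a # b` while `uᶜ` is not `b`-small, then `b # w`. By
discreteness only finitely many `b ∈ A` are linked to `w`, and each of them is linked to
only finitely many self-linked `a ∈ A`; shrinking `t` to a neighborhood `o` whose
complement is small for none of these `a` does the job. Distance `d` follows by
iterating. -/

namespace RHG

section Entourages

variable {T : Type*} [TopologicalSpace T]

lemma eSmall.mono {e : Entourage T} {s t : Set T} (hs : eSmall e s) (hts : t ⊆ s) :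
    eSmall e t :=
  fun x hx y hy => hs x (hts hx) y (hts hy)

lemma EntLinked.symm {a b : Entourage T} (h : EntLinked a b) : EntLinked b a := by
  rintro ⟨sb, sa, hb, ha, hcover⟩
  exact h ⟨sa, sb, ha, hb, Set.union_comm sb sa ▸ hcover⟩

variable {A : Set (Entourage T)} {a b : Entourage T}

lemma AdistLE.refl (n : ℕ) (ha : a ∈ A) (haa : EntLinked a a) : AdistLE A n a a :=
  ⟨fun _ => a, rfl, rfl, fun _ _ => ha, fun _ _ => haa⟩

lemma AdistLE.symm {n : ℕ} (h : AdistLE A n a b) : AdistLE A n b a := by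
  obtain ⟨c, hc0, hcn, hcA, hlink⟩ := h
  refine ⟨fun i => c (n - i), by simpa using hcn, by simpa using hc0,
    fun i _ => hcA _ (by omega), fun i hi => ?_⟩
  have hsucc : n - i = n - (i + 1) + 1 := by omega
  simpa only [hsucc] using (hlink (n - (i + 1)) (by omega)).symm

lemma AdistLE.eq_of_zero (h : AdistLE A 0 a b) : a = b := by
  obtain ⟨c, hc0, hcn, -, -⟩ := h
  exact hc0 ▸ hcn

lemma AdistLE.exists_of_succ {n : ℕ} (h : AdistLE A (n + 1) a b) :
    ∃ c ∈ A, EntLinked a c ∧ AdistLE A n c b := by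
  obtain ⟨c, hc0, hcn, hcA, hlink⟩ := h
  exact ⟨c 1, hcA 1 (by omega), hc0 ▸ hlink 0 (by omega),
    fun i => c (i + 1), rfl, hcn, fun i hi => hcA (i + 1) (by omega),
    fun i hi => hlink (i + 1) (by omega)⟩

lemma entLinked_of_not_eSmall {w : Entourage T} {s t : Set T}
    (hw : ∀ x ∈ s, ∀ y ∈ t, (x, y) ∉ w.carrier) (ha : eSmall a tᶜ) (hab : EntLinked a b)
    (hb : ¬ eSmall b s) : EntLinked b w := by
  rintro ⟨b₀, w₀, hb₀, hw₀, hcover⟩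
  obtain ⟨y, hy⟩ : ∃ y, y ∉ tᶜ ∪ b₀ :=
    not_forall.mp fun h => hab ⟨tᶜ, b₀, ha, hb₀, Set.eq_univ_of_forall h⟩
  simp only [Set.mem_union, not_or, Set.notMem_compl_iff] at hy
  have mem_w₀ : ∀ z, z ∉ b₀ → z ∈ w₀ := fun z hz =>
    (Set.eq_univ_iff_forall.mp hcover z).resolve_left hz
  obtain ⟨x, hxs, hxb₀⟩ : ∃ x ∈ s, x ∉ b₀ := by
    by_contra! hs
    exact hb fun x hx x' hx' => hb₀ x (hs x hx) x' (hs x' hx')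
  exact hw x hxs y hy.1 (hw₀ x (mem_w₀ x hxb₀) y (mem_w₀ y hy.2))

def Entourage.avoiding {K L : Set T} (hK : IsClosed K) (hL : IsClosed L)
    (hKL : Disjoint K L) : Entourage T where
  carrier := (K ×ˢ L ∪ L ×ˢ K)ᶜ
  symm' x y := by
    simp only [Set.mem_compl_iff, Set.mem_union, Set.mem_prod]
    tauto
  mem_nhds' x := by
    refine ((hK.prod hL).union (hL.prod hK)).isOpen_compl.mem_nhds ?_
    simp only [Set.mem_compl_iff, Set.mem_union, Set.mem_prod]
    exact fun h => h.elim (fun h => hKL.ne_of_mem h.1 h.2 rfl)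
      (fun h => hKL.ne_of_mem h.2 h.1 rfl)

lemma Entourage.notMem_avoiding {K L : Set T} (hK : IsClosed K) (hL : IsClosed L)
    (hKL : Disjoint K L) {x y : T} (hx : x ∈ K) (hy : y ∈ L) :
    (x, y) ∉ (Entourage.avoiding hK hL hKL).carrier :=
  fun h => h (Or.inl ⟨hx, hy⟩)

end Entourages

open Filter Topology

section Neighborhoods

variable {T : Type*} [TopologicalSpace T] [T1Space T] {A : Set (Entourage T)}

/-- Otherwise `T = {p}ᶜ ∪ {p}` would unlink `a` from itself. -/
lemma eventually_smallSets_not_eSmall_compl {a : Entourage T} (haa : EntLinked a a) (p : T) :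
    ∀ᶠ o in (𝓝 p).smallSets, ¬ eSmall a oᶜ := by
  refine eventually_smallSets'
    (fun s t hst ht hs => ht (hs.mono (Set.compl_subset_compl.mpr hst))) |>.mpr ?_
  by_contra! h
  refine haa ⟨{p}ᶜ, {p}, fun x hx y hy => ?_, ?_, Set.compl_union_self {p}⟩
  · have hxy : ({x, y} : Set T)ᶜ ∈ 𝓝 p :=
      (Set.toFinite _).isClosed.compl_mem_nhds (by simp_all [eq_comm])
    exact h _ hxy x (by simp) y (by simp)
  · rintro _ rfl _ rfl
    exact mem_of_mem_nhds (a.mem_nhds' _)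

lemma DiscreteEnts.eventually_not_linked (hdisc : DiscreteEnts A)
    (hA : ∀ a ∈ A, EntLinked a a) (w : Entourage T) (p : T) :
    ∀ᶠ o in (𝓝 p).smallSets, ∀ a ∈ A, eSmall a oᶜ → ¬ EntLinked a w := by
  have := (eventually_all_finite (hdisc w)).mpr fun a ha =>
    eventually_smallSets_not_eSmall_compl (hA a ha.1) p
  filter_upwards [this] with o ho a ha hsmall hlink
  exact ho a ⟨ha, hlink⟩ hsmall

variable [RegularSpace T]

lemma eventually_eSmall_compl_of_linked (hdisc : DiscreteEnts A)
    (hA : ∀ a ∈ A, EntLinked a a) {p : T} {u : Set T} (hu : u ∈ 𝓝 p) :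
    ∀ᶠ o in (𝓝 p).smallSets,
      ∀ a ∈ A, eSmall a oᶜ → ∀ b ∈ A, EntLinked a b → eSmall b uᶜ := by
  obtain ⟨t, ht, htc, htu⟩ := exists_mem_nhds_isClosed_subset (interior_mem_nhds.mpr hu)
  have hdisj : Disjoint (interior u)ᶜ t := disjoint_compl_left.mono_right htu
  set w := Entourage.avoiding isOpen_interior.isClosed_compl htc hdisj
  -- A `b ∈ A` linked to some `a` making `tᶜ` small, but not making `uᶜ` small, is linked
  -- to `w`; there are only finitely many of those.
  have hfar := (eventually_all_finite (hdisc w)).mpr fun b _ =>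
    hdisc.eventually_not_linked hA b p
  filter_upwards [hfar, eventually_smallSets_subset.mpr ht] with o hfar hot a ha hsmall b hb hab
  by_contra hbu
  have hbw : EntLinked b w :=
    entLinked_of_not_eSmall (fun x hx y hy => Entourage.notMem_avoiding _ _ hdisj hx hy)
      (hsmall.mono (Set.compl_subset_compl.mpr hot)) hab
      (fun h => hbu (h.mono (Set.compl_subset_compl.mpr interior_subset)))
  exact hfar b ⟨hb, hbw⟩ a ha hsmall hab

lemma eventually_eSmall_compl_of_adistLE (hdisc : DiscreteEnts A)
    (hA : ∀ a ∈ A, EntLinked a a) (p : T) (d : ℕ) {u : Set T} (hu : u ∈ 𝓝 p) :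
    ∀ᶠ o in (𝓝 p).smallSets,
      ∀ a ∈ A, eSmall a oᶜ → ∀ b, AdistLE A d a b → eSmall b uᶜ := by
  induction d generalizing u with
  | zero =>
    filter_upwards [eventually_smallSets_subset.mpr hu] with o hou a _ hsmall b hab
    exact hab.eq_of_zero ▸ hsmall.mono (Set.compl_subset_compl.mpr hou)
  | succ d ih =>
    obtain ⟨v, hv, hvu⟩ := eventually_smallSets.mp (ih hu)
    filter_upwards [eventually_eSmall_compl_of_linked hdisc hA hv] with o ho a ha hsmall b hab
    obtain ⟨c, hc, hac, hcb⟩ := hab.exists_of_succ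
    exact hvu v subset_rfl c hc (ho a ha hsmall c hc hac) b hcb

end Neighborhoods

section TildeTopology

variable {T : Type*} [TopologicalSpace T] {A : Set (Entourage T)}

/-- The set `õ` of `T̃` attached to `o ⊆ T`. -/
def tildeHull (A : Set (Entourage T)) (o : Set T) : Set (T ⊕ ↥A) :=
  Sum.inl '' o ∪ Sum.inr '' {e : ↥A | eSmall (↑e) oᶜ}

lemma tildeHull_mono {o o' : Set T} (h : o ⊆ o') : tildeHull A o ⊆ tildeHull A o' := by
  rintro x (⟨t, ht, rfl⟩ | ⟨e, he, rfl⟩)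
  · exact Or.inl ⟨t, h ht, rfl⟩
  · exact Or.inr ⟨e, he.mono (Set.compl_subset_compl.mpr h), rfl⟩

lemma inl_mem_tildeHull {p : T} {o : Set T} : Sum.inl p ∈ tildeHull A o ↔ p ∈ o := by
  simp [tildeHull]

lemma inr_mem_tildeHull {e : ↥A} {o : Set T} :
    Sum.inr e ∈ tildeHull A o ↔ eSmall (↑e) oᶜ := by
  simp [tildeHull]

lemma isOpen_tildeHull {o : Set T} (ho : IsOpen o) : @IsOpen _ (tildeTop A) (tildeHull A o) :=
  TopologicalSpace.GenerateOpen.basic _ (Or.inr ⟨o, ho, rfl⟩)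

lemma isOpen_singleton_inr (e : ↥A) : @IsOpen _ (tildeTop A) {Sum.inr e} :=
  TopologicalSpace.GenerateOpen.basic _ (Or.inl ⟨e, rfl⟩)

lemma exists_tildeHull_subset {U : Set (T ⊕ ↥A)} (hU : @IsOpen _ (tildeTop A) U) {p : T}
    (hp : Sum.inl p ∈ U) : ∃ o ∈ 𝓝 p, tildeHull A o ⊆ U := by
  induction hU generalizing p with
  | basic s hs =>
    rcases hs with ⟨e, rfl⟩ | ⟨o, ho, rfl⟩
    · simp at hp
    · exact ⟨o, ho.mem_nhds (inl_mem_tildeHull.mp hp), subset_rfl⟩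
  | univ => exact ⟨Set.univ, Filter.univ_mem, Set.subset_univ _⟩
  | inter s t _ _ ihs iht =>
    obtain ⟨o₁, ho₁, hs⟩ := ihs hp.1
    obtain ⟨o₂, ho₂, ht⟩ := iht hp.2
    exact ⟨o₁ ∩ o₂, Filter.inter_mem ho₁ ho₂, fun x hx =>
      ⟨hs (tildeHull_mono Set.inter_subset_left hx),
        ht (tildeHull_mono Set.inter_subset_right hx)⟩⟩
  | sUnion S _ ih =>
    obtain ⟨s, hsS, hps⟩ := hp
    obtain ⟨o, ho, hos⟩ := ih s hsS hps
    exact ⟨o, ho, hos.trans (Set.subset_sUnion_of_mem hsS)⟩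

lemma hasBasis_nhds_inl (p : T) :
    (@nhds _ (tildeTop A) (Sum.inl p)).HasBasis (· ∈ 𝓝 p) (tildeHull A) := by
  let := tildeTop A
  refine ⟨fun U => ⟨fun hU => ?_, fun ⟨o, ho, hoU⟩ => ?_⟩⟩
  · obtain ⟨V, hVU, hV, hpV⟩ := mem_nhds_iff.mp hU
    obtain ⟨o, ho, hoV⟩ := exists_tildeHull_subset hV hpV
    exact ⟨o, ho, hoV.trans hVU⟩
  · refine mem_of_superset ?_ ((tildeHull_mono interior_subset).trans hoU)
    exact (isOpen_tildeHull isOpen_interior).mem_nhds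
      (inl_mem_tildeHull.mpr (mem_interior_iff_mem_nhds.mpr ho))

lemma inl_mem_accPts_iff {S : Set ↥A} {p : T} :
    Sum.inl p ∈ @accPts _ (tildeTop A) (Sum.inr '' S) ↔
      ∀ o ∈ 𝓝 p, ∃ e ∈ S, eSmall (↑e) oᶜ := by
  let := tildeTop A
  have hS : Sum.inr '' S \ {Sum.inl p} = Sum.inr '' S :=
    Set.sdiff_singleton_eq_self (by simp)
  simp only [accPts, Set.mem_ofPred_eq, hS, mem_closure_iff_nhds_basis (hasBasis_nhds_inl p),
    Set.exists_mem_image, inr_mem_tildeHull]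

lemma inr_notMem_accPts (S : Set (T ⊕ ↥A)) (e : ↥A) :
    Sum.inr e ∉ @accPts _ (tildeTop A) S := fun h => by
  let := tildeTop A
  obtain ⟨x, hxe, -, hxne⟩ := mem_closure_iff.mp h _ (isOpen_singleton_inr e) rfl
  exact hxne hxe

lemma tendsto_inr_nhds_inl_iff {ι : Type*} {l : Filter ι} {x : ι → ↥A} {p : T} :
    Tendsto (fun n => (Sum.inr (x n) : T ⊕ ↥A)) l (@nhds _ (tildeTop A) (Sum.inl p)) ↔
      ∀ o ∈ 𝓝 p, ∀ᶠ n in l, eSmall (↑(x n)) oᶜ := by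
  simp only [(hasBasis_nhds_inl p).tendsto_right_iff, inr_mem_tildeHull]

variable [T1Space T] [RegularSpace T] (hdisc : DiscreteEnts A) (hA : ∀ a ∈ A, EntLinked a a)
include hdisc hA

lemma accPts_subset_of_forall_adistLE {S S' : Set ↥A} (d : ℕ)
    (h : ∀ a ∈ S, ∃ b ∈ S', AdistLE A d ↑a ↑b) :
    @accPts _ (tildeTop A) (Sum.inr '' S) ⊆ @accPts _ (tildeTop A) (Sum.inr '' S') := by
  rintro (p | e) hp
  · rw [inl_mem_accPts_iff] at hp ⊢
    intro u hu
    obtain ⟨o, ho, hou⟩ := eventually_smallSets.mp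
      (eventually_eSmall_compl_of_adistLE hdisc hA p d hu)
    obtain ⟨a, haS, hsmall⟩ := hp o ho
    obtain ⟨b, hbS', hab⟩ := h a haS
    exact ⟨b, hbS', hou o subset_rfl a a.2 hsmall b hab⟩
  · exact absurd hp (inr_notMem_accPts _ e)

lemma tendsto_inr_of_adistLE {ι : Type*} {l : Filter ι} {x y : ι → ↥A} {p : T} (d : ℕ)
    (h : ∀ n, AdistLE A d ↑(x n) ↑(y n))
    (hx : Tendsto (fun n => (Sum.inr (x n) : T ⊕ ↥A)) l (@nhds _ (tildeTop A) (Sum.inl p))) :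
    Tendsto (fun n => (Sum.inr (y n) : T ⊕ ↥A)) l (@nhds _ (tildeTop A) (Sum.inl p)) := by
  rw [tendsto_inr_nhds_inl_iff] at hx ⊢
  intro u hu
  obtain ⟨o, ho, hou⟩ := eventually_smallSets.mp
    (eventually_eSmall_compl_of_adistLE hdisc hA p d hu)
  filter_upwards [hx o ho] with n hn
  exact hou o subset_rfl _ (x n).2 hn _ (h n)

end TildeTopology

theorem boundary_of_neighborhood_general {T : Type*} [TopologicalSpace T]
    [CompactSpace T] [T2Space T]
    (A : Set (Entourage T)) (hgood : ∀ a ∈ A, GoodEnt a) (hdisc : DiscreteEnts A)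
    (B : Set (Entourage T)) (hBA : B ⊆ A)
    (d : ℕ) :
    (@accPts _ (tildeTop A) (Sum.inr '' {e : ↥A | (e : Entourage T) ∈ B}) =
      @accPts _ (tildeTop A) (Sum.inr '' {e : ↥A | (e : Entourage T) ∈ Anbhd A d B})) ∧
    ∀ (b c : ℕ → Entourage T) (hb : ∀ n, b n ∈ A) (hc : ∀ n, c n ∈ A),
      (∃ d' : ℕ, ∀ n, AdistLE A d' (b n) (c n)) →
      ∀ p : T,
        (Filter.Tendsto (fun n => (Sum.inr ⟨b n, hb n⟩ : T ⊕ ↥A)) Filter.atTop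
            (@nhds _ (tildeTop A) (Sum.inl p)) ↔
          Filter.Tendsto (fun n => (Sum.inr ⟨c n, hc n⟩ : T ⊕ ↥A)) Filter.atTop
            (@nhds _ (tildeTop A) (Sum.inl p))) := by
  have hA : ∀ a ∈ A, EntLinked a a := fun a ha => (hgood a ha).1
  have hrefl : ∀ a : ↥A, AdistLE A d a a := fun a => .refl d a.2 (hA a a.2)
  refine ⟨subset_antisymm ?_ ?_, fun b c hb hc ⟨d', hbc⟩ p => ?_⟩
  · exact accPts_subset_of_forall_adistLE hdisc hA d fun a ha =>
      ⟨a, ⟨a.2, a, ha, hrefl a⟩, hrefl a⟩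
  · exact accPts_subset_of_forall_adistLE hdisc hA d fun _ ⟨_, b, hb, hab⟩ =>
      ⟨⟨b, hBA hb⟩, hb, hab⟩
  · exact ⟨tendsto_inr_of_adistLE hdisc hA d' hbc,
      tendsto_inr_of_adistLE hdisc hA d' fun n => (hbc n).symm⟩

/-- Let `B` be an infinite subset of a discrete set `A` of entourages and let
`C = N_d(B)` be its `d`-neighborhood in the graph of entourages. Then the sets of
accumulation points of `B` and of `C` in `T̃ = T ⊔ A` coincide. In particular, two
sequences in `A` at uniformly bounded distance `d_A` from each other converge to a point
`p ∈ T` simultaneously. -/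
theorem boundary_of_neighborhood {T : Type*} [TopologicalSpace T]
    [CompactSpace T] [T2Space T] (h3 : HasThreePts T)
    (A : Set (Entourage T)) (hgood : ∀ a ∈ A, GoodEnt a) (hdisc : DiscreteEnts A)
    (B : Set (Entourage T)) (hBA : B ⊆ A) (hBinf : B.Infinite)
    (d : ℕ) (hd : 0 < d) :
    (@accPts _ (tildeTop A) (Sum.inr '' {e : ↥A | (e : Entourage T) ∈ B}) =
      @accPts _ (tildeTop A) (Sum.inr '' {e : ↥A | (e : Entourage T) ∈ Anbhd A d B})) ∧
    ∀ (b c : ℕ → Entourage T) (hb : ∀ n, b n ∈ A) (hc : ∀ n, c n ∈ A),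
      (∃ d' : ℕ, ∀ n, AdistLE A d' (b n) (c n)) →
      ∀ p : T,
        (Filter.Tendsto (fun n => (Sum.inr ⟨b n, hb n⟩ : T ⊕ ↥A)) Filter.atTop
            (@nhds _ (tildeTop A) (Sum.inl p)) ↔
          Filter.Tendsto (fun n => (Sum.inr ⟨c n, hc n⟩ : T ⊕ ↥A)) Filter.atTop
            (@nhds _ (tildeTop A) (Sum.inl p))) :=
  boundary_of_neighborhood_general A hgood hdisc B hBA d

end RHG
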